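/- arXiv:2311.01791 — 2 statements merged into one kernel-verified Lean document; each statement's English description precedes it below -/
import Mathlib

section
/- For every integer n ≥ 2 and every f ∈ R_n, one has D_n(f) = 0 if and only if there exists an integer m ≥ 0 such that x_{n,0}^m · f belongs to the ℚ-subalgebra of R_n generated by x_{n,0}, x̄_{n,2}, x̄_{n,3}, …, x̄_{n,n}. (Equivalently, the kernel of the canonical extension D'_n of D_n to R'_n = R_n[x_{n,0}^{−1}] is the ℚ[x_{n,0}^{±1}]-subalgebra of R'_n generated by x̄_{n,2}, …, x̄_{n,n}.) -/
open MvPolynomial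

noncomputable section

/-- `R n` is the polynomial ring `ℚ[x_{n,0}, …, x_{n,n}]`. -/
abbrev R (n : ℕ) : Type := MvPolynomial (Fin (n + 1)) ℚ

/-- The variable `x_{n,k}` of `R n` (and `0` for out-of-range indices, which never occur below). -/
def x (n k : ℕ) : R n := if h : k < n + 1 then X ⟨k, h⟩ else 0

/-- The derivation `D_n = Σ_{k=0}^{n-1} x_{n,k} ∂/∂x_{n,k+1}`, i.e. the unique `ℚ`-linear
derivation with `D_n(x_{n,k}) = x_{n,k-1}` for `1 ≤ k ≤ n` and `D_n(x_{n,0}) = 0`. -/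
def D (n : ℕ) : Derivation ℚ (R n) (R n) :=
  MvPolynomial.mkDerivation ℚ fun j : Fin (n + 1) =>
    if (j : ℕ) = 0 then 0 else x n ((j : ℕ) - 1)

/-- `x̄_{n,2ℓ} := x_{n,ℓ}² + 2 Σ_{i=0}^{ℓ−1} (−1)^{ℓ+i} x_{n,i} x_{n,2ℓ−i}`. -/
def xbarE (n l : ℕ) : R n :=
  x n l ^ 2 + 2 * ∑ i ∈ Finset.range l, (-1 : R n) ^ (l + i) * x n i * x n (2 * l - i)

/-- `x̂_{n,2ℓ+1} := x_{n,ℓ}x_{n,ℓ+1} + Σ_{i=0}^{ℓ−1} (−1)^{ℓ+i}(2ℓ−2i+1) x_{n,i} x_{n,2ℓ+1−i}`. -/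
def xhatO (n l : ℕ) : R n :=
  x n l * x n (l + 1) +
    ∑ i ∈ Finset.range l,
      (-1 : R n) ^ (l + i) * ((2 * l - 2 * i + 1 : ℕ) : R n) * x n i * x n (2 * l + 1 - i)

/-- `x̄_{n,2ℓ+1} := x_{n,1}·x̄_{n,2ℓ} − x_{n,0}·x̂_{n,2ℓ+1}`. -/
def xbarO (n l : ℕ) : R n := x n 1 * xbarE n l - x n 0 * xhatO n l

/-- `x̄_{n,k}` for `k ≥ 2` (even or odd case). -/
def xbar (n k : ℕ) : R n := if k % 2 = 0 then xbarE n (k / 2) else xbarO n (k / 2)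


set_option maxHeartbeats 1000000
set_option synthInstance.maxHeartbeats 1000000

lemma D_const_mul (n : ℕ) (c a : R n) (hc : D n c = 0) : D n (c * a) = c * D n a := by
  rw [(D n).leibniz, hc, smul_eq_mul, smul_eq_mul, mul_zero, add_zero]
lemma D_neg_one_pow (n m : ℕ) : D n ((-1 : R n) ^ m) = 0 := by
  rcases Nat.even_or_odd m with h | h
  · rw [h.neg_one_pow]; exact (D n).map_one_eq_zero
  · rw [h.neg_one_pow]; simp

lemma x_eq (n k : ℕ) (h : k ≤ n) : x n k = X (⟨k, by omega⟩ : Fin (n+1)) := by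
  simp [x, Nat.lt_succ_of_le h]
lemma x_out (n k : ℕ) (h : n < k) : x n k = 0 := by
  simp [x]; omega
lemma D_x0 (n : ℕ) : D n (x n 0) = 0 := by
  rw [x_eq n 0 (Nat.zero_le n), D, mkDerivation_X]; simp
lemma D_x_succ (n k : ℕ) (h : k + 1 ≤ n) : D n (x n (k+1)) = x n k := by
  rw [x_eq n (k+1) h, D, mkDerivation_X]; simp

lemma D_xbarE' (n m : ℕ) (h : 2*(m+1) ≤ n) : D n (xbarE n (m+1)) = 0 := by
  set l := m + 1 with hl
  have key : ∀ i ∈ Finset.range l, D n ((-1 : R n)^(l+i) * x n i * x n (2*l-i))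
      = (-1 : R n)^(l+i) * (D n (x n i) * x n (2*l-i)) + (-1 : R n)^(l+i) * (x n i * x n (2*l-1-i)) := by
    intro i hi
    have hi' : i < l := Finset.mem_range.mp hi
    rw [mul_assoc, D_const_mul n _ _ (D_neg_one_pow n _), (D n).leibniz]
    have h2 : 2*l - i = (2*l - 1 - i) + 1 := by omega
    rw [h2, D_x_succ n _ (by omega)]
    rw [smul_eq_mul, smul_eq_mul, mul_add]
    ring_nf
  unfold xbarE
  rw [map_add, D_const_mul n 2 _ ((D n).map_natCast 2), map_sum]
  rw [Finset.sum_congr rfl key, Finset.sum_add_distrib]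
  rw [Finset.sum_range_succ' (fun i => (-1 : R n)^(l+i) * (D n (x n i) * x n (2*l-i)))]
  rw [Finset.sum_range_succ (fun i => (-1 : R n)^(l+i) * (x n i * x n (2*l-1-i)))]
  rw [D_x0, pow_two]
  have hD : D n (x n l * x n l) = 2 * (x n l * x n m) := by
    rw [(D n).leibniz, hl, D_x_succ n m (by omega)]
    simp only [smul_eq_mul]; ring
  have e1 : ∀ i ∈ Finset.range m, (-1:R n)^(l+(i+1)) * (D n (x n (i+1)) * x n (2*l-(i+1)))
      = -((-1:R n)^(l+i) * (x n i * x n (2*l-1-i))) := by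
    intro i hi
    have hi' : i < m := Finset.mem_range.mp hi
    rw [D_x_succ n i (by omega)]
    have h3 : 2*l - (i+1) = 2*l - 1 - i := by omega
    have h4 : l + (i+1) = (l+i)+1 := by ring
    rw [h3, h4, pow_succ]
    ring
  rw [Finset.sum_congr rfl e1, Finset.sum_neg_distrib]
  have e2 : ((-1:R n)^(l+m)) = -1 := Odd.neg_one_pow ⟨m, by omega⟩
  have e3 : 2*l - 1 - m = l := by omega
  rw [e2, e3, hD]
  ring

lemma D_xhatO' (n m : ℕ) (h : 2*(m+1)+1 ≤ n) : D n (xhatO n (m+1)) = xbarE n (m+1) := by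
  set l := m + 1 with hl
  have key : ∀ i ∈ Finset.range l, D n ((-1 : R n)^(l+i) * ((2*l-2*i+1 : ℕ) : R n) * x n i * x n (2*l+1-i))
      = (-1 : R n)^(l+i) * ((2*l-2*i+1 : ℕ) : R n) * (D n (x n i) * x n (2*l+1-i))
        + (-1 : R n)^(l+i) * ((2*l-2*i+1 : ℕ) : R n) * (x n i * x n (2*l-i)) := by
    intro i hi
    have hi' : i < l := Finset.mem_range.mp hi
    have hc : D n ((-1 : R n)^(l+i) * ((2*l-2*i+1 : ℕ) : R n)) = 0 := by
      rw [D_const_mul n _ _ (D_neg_one_pow n _), (D n).map_natCast, mul_zero]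
    rw [mul_assoc, mul_assoc, ← mul_assoc ((-1 : R n)^(l+i)), D_const_mul n _ _ hc, (D n).leibniz]
    have h2 : 2*l + 1 - i = (2*l - i) + 1 := by omega
    rw [h2, D_x_succ n _ (by omega)]
    simp only [smul_eq_mul]
    ring
  unfold xhatO
  rw [map_add, map_sum, Finset.sum_congr rfl key, Finset.sum_add_distrib]
  rw [Finset.sum_range_succ' (fun i => (-1 : R n)^(l+i) * ((2*l-2*i+1 : ℕ) : R n) * (D n (x n i) * x n (2*l+1-i)))]
  have hD : D n (x n l * x n (l+1)) = x n m * x n (l+1) + x n l * x n l := by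
    rw [(D n).leibniz, hl, D_x_succ n m (by omega), D_x_succ n (m+1) (by omega)]
    simp only [smul_eq_mul]; ring
  rw [hD, D_x0]
  have e1 : ∀ i ∈ Finset.range m, (-1:R n)^(l+(i+1)) * ((2*l-2*(i+1)+1 : ℕ) : R n) * (D n (x n (i+1)) * x n (2*l+1-(i+1)))
      = -((-1:R n)^(l+i) * ((2*l-2*i-1 : ℕ) : R n) * (x n i * x n (2*l-i))) := by
    intro i hi
    have hi' : i < m := Finset.mem_range.mp hi
    rw [D_x_succ n i (by omega)]
    have h3 : 2*l + 1 - (i+1) = 2*l - i := by omega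
    have h4 : l + (i+1) = (l+i)+1 := by ring
    have h5 : 2*l - 2*(i+1) + 1 = 2*l - 2*i - 1 := by omega
    rw [h3, h4, h5, pow_succ]
    ring
  rw [Finset.sum_congr rfl e1]
  simp only [zero_mul, mul_zero, add_zero]
  have merge : ∑ i ∈ Finset.range l, -((-1:R n)^(l+i) * ((2*l-2*i-1 : ℕ) : R n) * (x n i * x n (2*l-i)))
      = (∑ i ∈ Finset.range m, -((-1:R n)^(l+i) * ((2*l-2*i-1 : ℕ) : R n) * (x n i * x n (2*l-i))))
        + -((-1:R n)^(l+m) * ((2*l-2*m-1 : ℕ) : R n) * (x n m * x n (2*l-m))) := by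
    rw [hl, Finset.sum_range_succ]
  have hterm : x n m * x n (l+1) = -((-1:R n)^(l+m) * ((2*l-2*m-1 : ℕ) : R n) * (x n m * x n (2*l-m))) := by
    have e2 : ((-1:R n)^(l+m)) = -1 := Odd.neg_one_pow ⟨m, by omega⟩
    have e3 : 2*l - m = l + 1 := by omega
    have e4 : 2*l - 2*m - 1 = 1 := by omega
    rw [e2, e3, e4]
    push_cast; ring
  have e5 : ∀ i ∈ Finset.range l,
      (-((-1:R n)^(l+i) * ((2*l-2*i-1 : ℕ) : R n) * (x n i * x n (2*l-i))) +
        (-1:R n)^(l+i) * ((2*l-2*i+1 : ℕ) : R n) * (x n i * x n (2*l-i)))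
      = 2 * ((-1:R n)^(l+i) * x n i * x n (2*l-i)) := by
    intro i hi
    have hi' : i < l := Finset.mem_range.mp hi
    have h6 : (2*l-2*i+1 : ℕ) = (2*l-2*i-1 : ℕ) + 2 := by omega
    rw [h6]
    push_cast
    ring
  have comb2 : (∑ i ∈ Finset.range l, -((-1:R n)^(l+i) * ((2*l-2*i-1 : ℕ) : R n) * (x n i * x n (2*l-i))))
      + (∑ i ∈ Finset.range l, (-1:R n)^(l+i) * ((2*l-2*i+1 : ℕ) : R n) * (x n i * x n (2*l-i)))
      = 2 * ∑ i ∈ Finset.range l, (-1:R n)^(l+i) * x n i * x n (2*l-i) := by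
    rw [← Finset.sum_add_distrib, Finset.sum_congr rfl e5, ← Finset.mul_sum]
  unfold xbarE
  linear_combination hterm - merge + comb2


lemma D_x0_pow (n m : ℕ) : D n (x n 0 ^ m) = 0 := by
  rw [(D n).leibniz_pow, D_x0, smul_zero, smul_zero]

lemma D_xbarO' (n m : ℕ) (h : 2*(m+1)+1 ≤ n) : D n (xbarO n (m+1)) = 0 := by
  unfold xbarO
  have Dx1 : D n (x n 1) = x n 0 := D_x_succ n 0 (by omega)
  rw [map_sub, (D n).leibniz, (D n).leibniz, D_xbarE' n m (by omega), D_xhatO' n m h, D_x0, Dx1]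
  simp only [smul_eq_mul, smul_zero, mul_zero, zero_add, add_zero, zero_mul]
  ring

lemma D_xbar (n k : ℕ) (h2 : 2 ≤ k) (hk : k ≤ n) : D n (xbar n k) = 0 := by
  unfold xbar
  rcases Nat.even_or_odd k with ⟨l, hl⟩ | ⟨l, hl⟩
  · have hl1 : 1 ≤ l := by omega
    obtain ⟨m, rfl⟩ := Nat.exists_eq_add_of_le hl1
    rw [if_pos (by omega), show k / 2 = m + 1 by omega]
    exact D_xbarE' n m (by omega)
  · have hl1 : 1 ≤ l := by omega
    obtain ⟨m, rfl⟩ := Nat.exists_eq_add_of_le hl1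
    rw [if_neg (by omega), show k / 2 = m + 1 by omega]
    exact D_xbarO' n m (by omega)

/-- the kernel of `D n` as a subalgebra. -/
def K (n : ℕ) : Subalgebra ℚ (R n) where
  carrier := {f | D n f = 0}
  add_mem' := by intro a b ha hb; simp only [Set.mem_setOf_eq, map_add] at *; rw [ha, hb, add_zero]
  mul_mem' := by
    intro a b ha hb; simp only [Set.mem_setOf_eq] at *
    rw [(D n).leibniz, ha, hb, smul_zero, smul_zero, add_zero]
  algebraMap_mem' := fun r => by
    simp only [Set.mem_setOf_eq, Derivation.map_algebraMap]

def Bsub (n : ℕ) : Subalgebra ℚ (R n) :=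
  Algebra.adjoin ℚ (insert (x n 0) {p : R n | ∃ k, 2 ≤ k ∧ k ≤ n ∧ p = xbar n k})

lemma Bsub_le_K (n : ℕ) : Bsub n ≤ K n := by
  apply Algebra.adjoin_le
  rintro p (rfl | ⟨k, h2, hk, rfl⟩)
  · exact D_x0 n
  · exact D_xbar n k h2 hk

/-- `B[x₁] ⊆ R n`. -/
def T (n : ℕ) : Subalgebra ↥(Bsub n) (R n) := Algebra.adjoin ↥(Bsub n) {x n 1}

lemma Bsub_subset_T (n : ℕ) (b : R n) (hb : b ∈ Bsub n) : b ∈ T n :=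
  show b ∈ (T n : Set (R n)) from by
    have := (T n).algebraMap_mem ⟨b, hb⟩
    simpa using this

lemma x1_mem_T (n : ℕ) : x n 1 ∈ T n := Algebra.subset_adjoin rfl

def U (n : ℕ) : Subalgebra ℚ (R n) where
  carrier := {f | ∃ m : ℕ, x n 0 ^ m * f ∈ T n}
  add_mem' := by
    rintro a b ⟨m1, h1⟩ ⟨m2, h2⟩
    refine ⟨max m1 m2, ?_⟩
    have e : x n 0 ^ (max m1 m2) * (a + b)
        = x n 0 ^ (max m1 m2 - m1) * (x n 0 ^ m1 * a) + x n 0 ^ (max m1 m2 - m2) * (x n 0 ^ m2 * b) := by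
      rw [← mul_assoc, ← mul_assoc, ← pow_add, ← pow_add,
        show max m1 m2 - m1 + m1 = max m1 m2 by omega, show max m1 m2 - m2 + m2 = max m1 m2 by omega]
      ring
    rw [e]
    have hx0T : ∀ j : ℕ, x n 0 ^ j ∈ T n := fun j =>
      pow_mem (Bsub_subset_T n _ (Algebra.subset_adjoin (Set.mem_insert _ _))) j
    exact add_mem (mul_mem (hx0T _) h1) (mul_mem (hx0T _) h2)
  mul_mem' := by
    rintro a b ⟨m1, h1⟩ ⟨m2, h2⟩
    refine ⟨m1 + m2, ?_⟩
    have e : x n 0 ^ (m1 + m2) * (a * b) = (x n 0 ^ m1 * a) * (x n 0 ^ m2 * b) := by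
      rw [pow_add]; ring
    rw [e]; exact mul_mem h1 h2
  algebraMap_mem' := fun q => ⟨0, by
    rw [pow_zero, one_mul]
    have : algebraMap ℚ (R n) q = algebraMap ↥(Bsub n) (R n) (algebraMap ℚ ↥(Bsub n) q) := by
      rw [← IsScalarTower.algebraMap_apply]
    rw [this]; exact (T n).algebraMap_mem _⟩

lemma absorb (n : ℕ) (f : R n) (h : x n 0 * f ∈ U n) : f ∈ U n := by
  obtain ⟨m, hm⟩ := h
  exact ⟨m + 1, by rwa [pow_succ, mul_assoc]⟩

lemma C_cancel (n : ℕ) (q : ℚ) (hq : q ≠ 0) (y : R n) (h : C q * y ∈ U n) : y ∈ U n := by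
  have e : y = C q⁻¹ * (C q * y) := by
    rw [← mul_assoc, ← C_mul, inv_mul_cancel₀ hq, C_1, one_mul]
  rw [e]
  exact mul_mem ((U n).algebraMap_mem q⁻¹) h

lemma T_subset_U (n : ℕ) (t : R n) (h : t ∈ T n) : t ∈ U n := ⟨0, by simpa using h⟩

lemma gen_mem_U (n k : ℕ) (h2 : 2 ≤ k) (hk : k ≤ n) : xbar n k ∈ U n :=
  T_subset_U n _ (Bsub_subset_T n _ (Algebra.subset_adjoin (Set.mem_insert_iff.mpr
    (Or.inr ⟨k, h2, hk, rfl⟩))))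

lemma xbarE_eq_xbar (n l : ℕ) : xbarE n l = xbar n (2*l) := by
  unfold xbar
  rw [if_pos (by omega), show 2*l/2 = l by omega]

lemma xbarO_eq_xbar (n l : ℕ) : xbarO n l = xbar n (2*l+1) := by
  unfold xbar
  rw [if_neg (by omega), show (2*l+1)/2 = l by omega]

lemma x_mem_U (n : ℕ) (hn : 2 ≤ n) : ∀ k, x n k ∈ U n := by
  intro k
  induction k using Nat.strong_induction_on with
  | _ k ih =>
  rcases Nat.lt_or_ge n k with hk | hk
  · rw [x_out n k hk]; exact zero_mem _
  rcases Nat.lt_or_ge k 2 with hk2 | hk2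
  · interval_cases k
    · exact T_subset_U n _ (Bsub_subset_T n _ (Algebra.subset_adjoin (Set.mem_insert _ _)))
    · exact T_subset_U n _ (x1_mem_T n)
  have hneg : (-1 : R n) ∈ U n := neg_mem (one_mem _)
  have hnat : ∀ j : ℕ, ((j : ℕ) : R n) ∈ U n := fun j => Subalgebra.natCast_mem _ j
  rcases Nat.even_or_odd k with ⟨l, hl⟩ | ⟨l, hl⟩
  · -- k = 2l
    have hl' : k = 2 * l := by omega
    obtain ⟨m, rfl⟩ : ∃ m, l = m + 1 := ⟨l - 1, by omega⟩
    set l := m + 1 with hldef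
    subst hl'
    have hbar : xbarE n l ∈ U n := by
      rw [xbarE_eq_xbar]; exact gen_mem_U n (2*l) (by omega) hk
    have idE : (C ((2:ℚ) * (-1)^l) : R n) * (x n 0 * x n (2*l))
        = xbarE n l - x n l^2
          - 2 * ∑ i ∈ Finset.range m, ((-1:R n)^(l+(i+1)) * x n (i+1) * x n (2*l-(i+1))) := by
      have hC : (C ((2:ℚ) * (-1)^l) : R n) = 2 * (-1:R n)^l := by
        rw [map_mul, map_pow, map_neg, map_one, map_ofNat]
      rw [hC]
      unfold xbarE
      rw [hldef, Finset.sum_range_succ' (fun i => (-1:R n)^(m+1+i) * x n i * x n (2*(m+1)-i)) m]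
      simp only [add_zero, Nat.sub_zero]
      ring
    apply absorb
    apply C_cancel n ((2:ℚ) * (-1)^l) (mul_ne_zero two_ne_zero (pow_ne_zero _ (by norm_num))) _
    rw [idE]
    refine sub_mem (sub_mem hbar (pow_mem (ih l (by omega)) 2)) (mul_mem ?_ (sum_mem ?_))
    · exact_mod_cast hnat 2
    · intro i hi
      have hi' : i < m := Finset.mem_range.mp hi
      exact mul_mem (mul_mem (pow_mem hneg _) (ih (i+1) (by omega))) (ih (2*l-(i+1)) (by omega))
  · -- k = 2l + 1
    have hl' : k = 2 * l + 1 := by omega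
    obtain ⟨m, rfl⟩ : ∃ m, l = m + 1 := ⟨l - 1, by omega⟩
    set l := m + 1 with hldef
    subst hl'
    have hbarE : xbarE n l ∈ U n := by
      rw [xbarE_eq_xbar]; exact gen_mem_U n (2*l) (by omega) (by omega)
    have hbarO : xbarO n l ∈ U n := by
      rw [xbarO_eq_xbar]; exact gen_mem_U n (2*l+1) (by omega) hk
    have hhat : xhatO n l ∈ U n := by
      apply absorb
      rw [show x n 0 * xhatO n l = x n 1 * xbarE n l - xbarO n l from by unfold xbarO; ring]
      exact sub_mem (mul_mem (T_subset_U n _ (x1_mem_T n)) hbarE) hbarO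
    have idO : (C (((2*l+1 : ℕ):ℚ) * (-1)^l) : R n) * (x n 0 * x n (2*l+1))
        = xhatO n l - x n l * x n (l+1)
          - ∑ i ∈ Finset.range m,
              ((-1:R n)^(l+(i+1)) * ((2*l-2*(i+1)+1 : ℕ) : R n) * x n (i+1) * x n (2*l+1-(i+1))) := by
      have hC : (C (((2*l+1 : ℕ):ℚ) * (-1)^l) : R n) = ((2*l+1 : ℕ) : R n) * (-1:R n)^l := by
        rw [map_mul, map_pow, map_neg, map_one, map_natCast]
      rw [hC]
      unfold xhatO
      rw [hldef, Finset.sum_range_succ'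
        (fun i => (-1:R n)^(m+1+i) * ((2*(m+1)-2*i+1 : ℕ) : R n) * x n i * x n (2*(m+1)+1-i)) m]
      simp only [add_zero, Nat.sub_zero, Nat.mul_zero]
      ring
    apply absorb
    apply C_cancel n (((2*l+1 : ℕ):ℚ) * (-1)^l) (mul_ne_zero (Nat.cast_ne_zero.mpr (by omega)) (pow_ne_zero _ (by norm_num))) _
    rw [idO]
    refine sub_mem (sub_mem hhat (mul_mem (ih l (by omega)) (ih (l+1) (by omega)))) (sum_mem ?_)
    intro i hi
    have hi' : i < m := Finset.mem_range.mp hi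
    exact mul_mem (mul_mem (mul_mem (pow_mem hneg _) (hnat _)) (ih (i+1) (by omega)))
      (ih (2*l+1-(i+1)) (by omega))

lemma mem_U_all (n : ℕ) (hn : 2 ≤ n) (f : R n) : f ∈ U n := by
  have h : f ∈ (⊤ : Subalgebra ℚ (R n)) := trivial
  rw [← MvPolynomial.adjoin_range_X] at h
  refine Algebra.adjoin_le ?_ h
  rintro p ⟨j, rfl⟩
  have hj := x_mem_U n hn (j : ℕ)
  rwa [x_eq n (j : ℕ) (by omega), Fin.eta] at hj

lemma D_aeval (n : ℕ) (hn : 1 ≤ n) (p : Polynomial ↥(Bsub n)) :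
    D n (Polynomial.aeval (x n 1) p) = x n 0 * Polynomial.aeval (x n 1) (Polynomial.derivative p) := by
  have Dx1 : D n (x n 1) = x n 0 := D_x_succ n 0 (by omega)
  induction p using Polynomial.induction_on' with
  | add p q hp hq =>
    rw [map_add, map_add, map_add, hp, hq, map_add, mul_add]
  | monomial k a =>
    rw [Polynomial.aeval_monomial, Polynomial.derivative_monomial, Polynomial.aeval_monomial]
    have ha : D n (algebraMap ↥(Bsub n) (R n) a) = 0 := Bsub_le_K n a.2
    rw [(D n).leibniz, ha, (D n).leibniz_pow, Dx1]
    rw [map_mul, map_natCast]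
    simp only [smul_eq_mul, mul_zero, add_zero]
    cases k with
    | zero => simp
    | succ k =>
      simp only [Nat.add_sub_cancel]
      push_cast
      ring

lemma descent (n : ℕ) (hn : 2 ≤ n) (g : R n) (hg : D n g = 0) :
    ∀ d (p : Polynomial ↥(Bsub n)), p.natDegree ≤ d → Polynomial.aeval (x n 1) p = g →
      g ∈ Bsub n := by
  intro d
  induction d with
  | zero =>
    intro p hd hp
    rw [Polynomial.eq_C_of_natDegree_le_zero hd] at hp
    rw [← hp, Polynomial.aeval_C]
    exact (p.coeff 0).2
  | succ d ih =>
    intro p hd hp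
    have hder : Polynomial.aeval (x n 1) (Polynomial.derivative p) = 0 := by
      have h1 : x n 0 * Polynomial.aeval (x n 1) (Polynomial.derivative p) = 0 := by
        rw [← D_aeval n (by omega) p, hp, hg]
      have hx0 : x n 0 ≠ 0 := by
        rw [x_eq n 0 (by omega)]; exact MvPolynomial.X_ne_zero _
      rcases mul_eq_zero.mp h1 with h | h
      · exact absurd h hx0
      · exact h
    set q := Polynomial.derivative p with hq
    set r' : Polynomial ↥(Bsub n) := (d+1) • p - Polynomial.X * q with hr'
    have hr'deg : r'.natDegree ≤ d := by
      apply Polynomial.natDegree_le_iff_coeff_eq_zero.mpr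
      intro i hi
      rw [hr', Polynomial.coeff_sub, Polynomial.coeff_smul]
      obtain ⟨j, rfl⟩ : ∃ j, i = j + 1 := ⟨i - 1, by omega⟩
      rw [Polynomial.coeff_X_mul, hq, Polynomial.coeff_derivative]
      rcases Nat.lt_or_ge (d+1) (j+1) with hcase | hcase
      · rw [Polynomial.coeff_eq_zero_of_natDegree_lt (by omega), smul_zero, zero_mul, sub_zero]
      · have hj : j = d := by omega
        subst hj
        rw [nsmul_eq_mul]
        push_cast
        ring
    have hr'val : Polynomial.aeval (x n 1) r' = (d+1 : ℕ) • g := by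
      have expand : Polynomial.aeval (x n 1) r'
          = (d+1) • Polynomial.aeval (x n 1) p
            - Polynomial.aeval (x n 1) (Polynomial.X : Polynomial ↥(Bsub n))
              * Polynomial.aeval (x n 1) q := by
        have hsub : ∀ a b : Polynomial ↥(Bsub n), Polynomial.aeval (x n 1) (a - b)
            = Polynomial.aeval (x n 1) a - Polynomial.aeval (x n 1) b := fun a b => map_sub _ a b
        rw [hr', hsub, map_mul, map_nsmul]
      rw [expand, Polynomial.aeval_X, hq, hder, mul_zero, sub_zero, hp]
    set c : ↥(Bsub n) := algebraMap ℚ ↥(Bsub n) (((d : ℚ)+1)⁻¹) with hc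
    refine ih (Polynomial.C c * r') (le_trans (Polynomial.natDegree_C_mul_le _ _) hr'deg) ?_
    rw [map_mul, Polynomial.aeval_C, hr'val]
    have hcast : algebraMap ↥(Bsub n) (R n) c = algebraMap ℚ (R n) (((d : ℚ)+1)⁻¹) := by
      rw [hc, ← IsScalarTower.algebraMap_apply]
    rw [hcast, nsmul_eq_mul]
    have : ((d+1 : ℕ) : R n) = algebraMap ℚ (R n) ((d : ℚ)+1) := by
      push_cast
      ring
    rw [this, ← mul_assoc, ← map_mul, inv_mul_cancel₀ (by positivity), map_one, one_mul]

/-- For every `n ≥ 2` and `f ∈ R_n`: `D_n(f) = 0` iff some `x_{n,0}^m · f` lies in the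
`ℚ`-subalgebra of `R_n` generated by `x_{n,0}, x̄_{n,2}, …, x̄_{n,n}`. -/
theorem statement4 (n : ℕ) (hn : 2 ≤ n) (f : R n) :
    D n f = 0 ↔
      ∃ m : ℕ, x n 0 ^ m * f ∈
        Algebra.adjoin ℚ (insert (x n 0) {p : R n | ∃ k, 2 ≤ k ∧ k ≤ n ∧ p = xbar n k}) := by
  constructor
  · intro hf
    obtain ⟨m, hm⟩ := mem_U_all n hn f
    rw [show T n = Algebra.adjoin ↥(Bsub n) {x n 1} from rfl,
      Algebra.adjoin_singleton_eq_range_aeval] at hm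
    obtain ⟨p, hp⟩ := hm
    refine ⟨m, ?_⟩
    have hg : D n (x n 0 ^ m * f) = 0 := by
      rw [(D n).leibniz, hf, D_x0_pow, smul_zero, smul_zero, add_zero]
    exact descent n hn (x n 0 ^ m * f) hg p.natDegree p le_rfl hp
  · rintro ⟨m, hm⟩
    have h0 : D n (x n 0 ^ m * f) = 0 := Bsub_le_K n hm
    rw [(D n).leibniz, D_x0_pow, smul_zero, add_zero, smul_eq_mul] at h0
    rcases mul_eq_zero.mp h0 with h | h
    · exact absurd h (pow_ne_zero m (by rw [x_eq n 0 (by omega)]; exact MvPolynomial.X_ne_zero _))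
    · exact h

end
end

section
/- Define the degree of a monomial of R_∞ by deg(x_{n,k}) = 2n − 2 − k, extended additively to products. For every integer d ≥ 3, if f ∈ R_∞^{(d)} is such that every monomial occurring in f has degree at most d − 2, and D_∞(f) = 0, then f = 0. (This is the algebraic form of the vanishing Ker(𝐃_d^d) = 0, which yields H_st^i(Γ_{∞,1}; Λ^d H̃_ℚ) = 0 for i < d with i ≡ d mod 2.) -/
open MvPolynomial

noncomputable section

/-- The index set `{(n,k) : 2 ≤ n, 0 ≤ k ≤ n}` of the variables `x_{n,k}` of `R_∞`. -/
abbrev Idx : Type := {p : ℕ × ℕ // 2 ≤ p.1 ∧ p.2 ≤ p.1}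

/-- The polynomial ring `R_∞ = ℚ[x_{n,k} : n ≥ 2, 0 ≤ k ≤ n]`. -/
abbrev Rinf : Type := MvPolynomial Idx ℚ

/-- The variable `x_{n,k}` (and `0` for out-of-range indices, which never occur below). -/
def xv (n k : ℕ) : Rinf := if h : 2 ≤ n ∧ k ≤ n then X ⟨(n, k), h⟩ else 0

/-- The derivation `D_∞` with `D_∞(x_{n,k}) = x_{n,k−1}` for `1 ≤ k ≤ n` and
`D_∞(x_{n,0}) = 0`. -/
def Dinf : Derivation ℚ Rinf Rinf :=
  MvPolynomial.mkDerivation ℚ fun s : Idx =>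
    if s.1.2 = 0 then 0 else xv s.1.1 (s.1.2 - 1)

/-- The weight `wt(x_{n,k}) = k`. -/
def wt : Idx → ℕ := fun s => s.1.2

/-- `R_∞^{(d)}`: the `ℚ`-span of the monomials of weight `d`. -/
def W (d : ℕ) : Submodule ℚ Rinf := weightedHomogeneousSubmodule ℚ wt d

/-- The degree `deg(x_{n,k}) = 2n − 2 − k` of a variable. -/
def degv : Idx → ℕ := fun s => 2 * s.1.1 - 2 - s.1.2

/-!
`D_∞` is the lowering operator of an `sl₂`-action on `R_∞`: with the raising derivation
`E(x_{n,k}) = (k+1)(n-k) x_{n,k+1}`, the commutator `H = [E, D_∞]` acts on `x_{n,k}` by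
`2k - n`. Split `f` by its `n`-degree `N = ∑ n`, a grading preserved by `D_∞`; on the part of
`n`-degree `N` the element `H` acts by `2d - N`, which is positive because
`deg(x_{n,k}) + k ≥ n` bounds `N` by `(d - 2) + d`. A lowest-weight vector of positive
`H`-weight on which `E` is nilpotent vanishes: `D_∞ E^{m+1} g = -(m+1)(c+m) E^m g` lets
`E^m g = 0` descend to `g = 0`, and `E^m g = 0` for `m > N` because the weight of a monomial
never exceeds its `n`-degree.
-/

namespace MvPolynomial

section Derivation

variable {σ R M : Type*} [CommSemiring R] [AddCommMonoid M] {w : σ → M}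

theorem IsWeightedHomogeneous.weightedHomogeneousComponent {φ : MvPolynomial σ R} {m : M}
    (hφ : φ.IsWeightedHomogeneous w m) {M' : Type*} [AddCommMonoid M'] (w' : σ → M') (n : M') :
    (weightedHomogeneousComponent w' n φ).IsWeightedHomogeneous w m := by
  classical
  intro v hv
  rw [coeff_weightedHomogeneousComponent] at hv
  split_ifs at hv with h
  · exact hφ hv
  · exact absurd rfl hv

theorem IsWeightedHomogeneous.derivation (D : Derivation R (MvPolynomial σ R) (MvPolynomial σ R))
    {c : M} (hD : ∀ s, (D (X s)).IsWeightedHomogeneous w (w s + c)) {φ : MvPolynomial σ R}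
    {m : M} (hφ : φ.IsWeightedHomogeneous w m) : (D φ).IsWeightedHomogeneous w (m + c) := by
  induction hφ using IsWeightedHomogeneous.induction_on with
  | zero => simpa using isWeightedHomogeneous_zero R w (m + c)
  | add p q _ _ hp hq => rw [map_add]; exact hp.add hq
  | monomial v r hv =>
    have hDmk : D = mkDerivation R fun s => D (X s) :=
      derivation_ext fun s => (mkDerivation_X R (fun s => D (X s)) s).symm
    rw [hDmk, mkDerivation_monomial, smul_eq_C_mul, Finsupp.sum]
    refine (IsWeightedHomogeneous.sum _ _ _ fun i hi => ?_).C_mul r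
    have hterm := (isWeightedHomogeneous_monomial w (v - Finsupp.single i 1) (v i : R) rfl).mul
      (hD i)
    rw [← add_assoc, Finsupp.weight_sub_single_add (Finsupp.mem_support_iff.mp hi), hv] at hterm
    exact hterm

theorem weightedHomogeneousComponent_derivation
    (D : Derivation R (MvPolynomial σ R) (MvPolynomial σ R))
    (hD : ∀ s, (D (X s)).IsWeightedHomogeneous w (w s)) (m : M) (φ : MvPolynomial σ R) :
    weightedHomogeneousComponent w m (D φ) = D (weightedHomogeneousComponent w m φ) := by
  induction φ using MvPolynomial.induction_on' with
  | monomial v r =>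
    have hv := isWeightedHomogeneous_monomial w v r rfl
    have hDv : (D (monomial v r)).IsWeightedHomogeneous w (Finsupp.weight w v) := by
      simpa using hv.derivation D (c := 0) (by simpa using hD)
    by_cases h : Finsupp.weight w v = m
    · rw [← h, hDv.weightedHomogeneousComponent_same, hv.weightedHomogeneousComponent_same]
    · rw [hDv.weightedHomogeneousComponent_ne _ (Ne.symm h),
        hv.weightedHomogeneousComponent_ne _ (Ne.symm h), map_zero]
  | add p q hp hq => simp only [map_add, hp, hq]

end Derivation

theorem mkDerivation_smul_X_of_isWeightedHomogeneous {σ R : Type*} [CommSemiring R] {w : σ → R}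
    {φ : MvPolynomial σ R} {m : R} (hφ : φ.IsWeightedHomogeneous w m) :
    mkDerivation R (fun s => w s • X s) φ = m • φ := by
  induction hφ using IsWeightedHomogeneous.induction_on with
  | zero => simp
  | add p q _ _ hp hq => rw [map_add, hp, hq, smul_add]
  | monomial v r hv =>
    rw [mkDerivation_monomial, ← hv, Finsupp.weight_apply, Finsupp.sum, Finsupp.sum,
      Finset.sum_smul, Finset.smul_sum]
    refine Finset.sum_congr rfl fun i hi => ?_
    rw [smul_eq_C_mul (X i), smul_eq_mul, X, C_mul_monomial, monomial_mul,
      Finsupp.sub_add_single_one_cancel (Finsupp.mem_support_iff.mp hi), smul_monomial,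
      smul_monomial, nsmul_eq_mul]
    ring_nf

end MvPolynomial

section Sl2

variable {K V : Type*} [AddCommGroup V]

theorem lowering_iterate_raising_succ [CommRing K] [Module K V] {E D H : V →ₗ[K] V}
    (hEDH : ∀ x, E (D x) - D (E x) = H x) {g : V} {c : K}
    (hH : ∀ m : ℕ, H (E^[m] g) = (c + 2 * m) • E^[m] g) (hD : D g = 0) (m : ℕ) :
    D (E^[m + 1] g) = -((m + 1) * (c + m)) • E^[m] g := by
  induction m with
  | zero =>
    have h := hEDH g
    have hH0 := hH 0
    rw [hD, map_zero] at h
    simp only [Function.iterate_zero_apply, Function.iterate_one, Nat.cast_zero, mul_zero,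
      add_zero, zero_add, one_mul] at hH0 ⊢
    linear_combination (norm := module) -h - hH0
  | succ m ih =>
    have h := hEDH (E^[m + 1] g)
    rw [ih, map_smul, ← Function.iterate_succ_apply' E, hH] at h
    rw [Function.iterate_succ_apply' E]
    push_cast at h ⊢
    linear_combination (norm := module) -h

theorem eq_zero_of_lowering_eq_zero_of_cartan_pos [Field K] [LinearOrder K]
    [IsStrictOrderedRing K] [Module K V] {E D H : V →ₗ[K] V}
    (hEDH : ∀ x, E (D x) - D (E x) = H x) {g : V} {c : K} (hc : 0 < c)
    (hH : ∀ m : ℕ, H (E^[m] g) = (c + 2 * m) • E^[m] g) (hD : D g = 0) {M : ℕ}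
    (hM : E^[M] g = 0) : g = 0 := by
  have hstep : ∀ m : ℕ, E^[m + 1] g = 0 → E^[m] g = 0 := fun m hm => by
    have h := lowering_iterate_raising_succ hEDH hH hD m
    rw [hm, map_zero, eq_comm, smul_eq_zero] at h
    exact h.resolve_left (neg_ne_zero.mpr (by positivity))
  induction M with
  | zero => exact hM
  | succ M ih => exact ih (hstep M hM)

end Sl2

def nwt : Idx → ℕ := fun s => s.1.1

/-- With these coefficients `x_{n,0}, …, x_{n,n}` span the irreducible `sl₂`-representation of
dimension `n + 1`. -/
def Einf : Derivation ℚ Rinf Rinf :=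
  mkDerivation ℚ fun s : Idx =>
    (((s.1.2 : ℚ) + 1) * ((s.1.1 : ℚ) - s.1.2)) • xv s.1.1 (s.1.2 + 1)

def cartanWt : Idx → ℚ := fun s => 2 * (s.1.2 : ℚ) - s.1.1

def Hinf : Derivation ℚ Rinf Rinf := mkDerivation ℚ fun s => cartanWt s • X s

lemma xv_of_le {n k : ℕ} (hn : 2 ≤ n) (hk : k ≤ n) : xv n k = X ⟨(n, k), hn, hk⟩ :=
  dif_pos ⟨hn, hk⟩

lemma isWeightedHomogeneous_xv {M : Type*} [AddCommMonoid M] {w : Idx → M} {n k : ℕ} {m : M}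
    (h : ∀ hnk, w ⟨(n, k), hnk⟩ = m) : (xv n k).IsWeightedHomogeneous w m := by
  unfold xv
  split_ifs with hnk
  · exact h hnk ▸ isWeightedHomogeneous_X ℚ w _
  · exact isWeightedHomogeneous_zero ℚ w m

lemma Dinf_X (s : Idx) : Dinf (X s) = if s.1.2 = 0 then 0 else xv s.1.1 (s.1.2 - 1) :=
  mkDerivation_X ℚ _ s

lemma Einf_X (s : Idx) :
    Einf (X s) = (((s.1.2 : ℚ) + 1) * ((s.1.1 : ℚ) - s.1.2)) • xv s.1.1 (s.1.2 + 1) :=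
  mkDerivation_X ℚ _ s

lemma isWeightedHomogeneous_Dinf_X_nwt (s : Idx) :
    (Dinf (X s)).IsWeightedHomogeneous nwt (nwt s) := by
  rw [Dinf_X]
  split_ifs
  · exact isWeightedHomogeneous_zero ℚ nwt _
  · exact isWeightedHomogeneous_xv fun _ => rfl

lemma isWeightedHomogeneous_Einf_X_wt (s : Idx) :
    (Einf (X s)).IsWeightedHomogeneous wt (wt s + 1) := by
  rw [Einf_X, smul_eq_C_mul]
  exact (isWeightedHomogeneous_xv fun _ => rfl).C_mul _

lemma isWeightedHomogeneous_Einf_X_nwt (s : Idx) :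
    (Einf (X s)).IsWeightedHomogeneous nwt (nwt s) := by
  rw [Einf_X, smul_eq_C_mul]
  exact (isWeightedHomogeneous_xv fun _ => rfl).C_mul _

lemma Einf_Dinf_X (s : Idx) :
    Einf (Dinf (X s)) = ((s.1.2 : ℚ) * (s.1.1 - s.1.2 + 1)) • X s := by
  obtain ⟨⟨n, k⟩, hn, hk⟩ := s
  rw [Dinf_X]
  rcases k with _ | k
  · simp
  · simp only [Nat.add_one_ne_zero, if_false, Nat.add_sub_cancel]
    rw [xv_of_le hn (by omega), Einf_X, xv_of_le hn hk]
    congr 1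
    push_cast
    ring

lemma Dinf_Einf_X (s : Idx) :
    Dinf (Einf (X s)) = (((s.1.2 : ℚ) + 1) * (s.1.1 - s.1.2)) • X s := by
  obtain ⟨⟨n, k⟩, hn, hk⟩ := s
  simp only at hn hk
  rw [Einf_X]
  rcases hk.lt_or_eq with hk | rfl
  · rw [xv_of_le hn hk, Derivation.map_smul, Dinf_X]
    simp only [Nat.add_one_ne_zero, if_false, Nat.succ_sub_one, xv_of_le hn hk.le]
  · simp

lemma commutator_Einf_Dinf : ⁅Einf, Dinf⁆ = Hinf := by
  refine derivation_ext fun s => ?_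
  rw [Derivation.commutator_apply, Einf_Dinf_X, Dinf_Einf_X, ← sub_smul, Hinf, mkDerivation_X,
    cartanWt]
  congr 1
  ring

lemma isWeightedHomogeneous_cartanWt {φ : Rinf} {a N : ℕ} (ha : φ.IsWeightedHomogeneous wt a)
    (hN : φ.IsWeightedHomogeneous nwt N) : φ.IsWeightedHomogeneous cartanWt (2 * a - N) := by
  intro v hv
  rw [← ha hv, ← hN hv]
  simp only [Finsupp.weight_apply, Finsupp.sum, cartanWt, wt, nwt, smul_eq_mul, nsmul_eq_mul,
    Nat.cast_sum, Nat.cast_mul, Finset.mul_sum, ← Finset.sum_sub_distrib]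
  exact Finset.sum_congr rfl fun _ _ => by ring

lemma eq_zero_of_isWeightedHomogeneous_of_lt {φ : Rinf} {a N : ℕ}
    (ha : φ.IsWeightedHomogeneous wt a) (hN : φ.IsWeightedHomogeneous nwt N) (h : N < a) :
    φ = 0 := by
  by_contra h0
  obtain ⟨v, hv⟩ := support_nonempty.mpr h0
  have hwt_le : Finsupp.weight wt v ≤ Finsupp.weight nwt v := by
    simp only [Finsupp.weight_apply, Finsupp.sum]
    exact Finset.sum_le_sum fun s _ => Nat.mul_le_mul_left _ s.2.2
  rw [ha (mem_support_iff.mp hv), hN (mem_support_iff.mp hv)] at hwt_le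
  omega

lemma weight_nwt_le_degree_add_weight_wt (v : Idx →₀ ℕ) :
    Finsupp.weight nwt v ≤ (v.sum fun s e => e * degv s) + Finsupp.weight wt v := by
  simp only [Finsupp.weight_apply, Finsupp.sum, ← Finset.sum_add_distrib, smul_eq_mul,
    ← mul_add]
  exact Finset.sum_le_sum fun s _ => Nat.mul_le_mul_left _ (by simp only [degv, wt, nwt]; omega)

lemma isWeightedHomogeneous_iterate_Einf {φ : Rinf} {a N : ℕ}
    (ha : φ.IsWeightedHomogeneous wt a) (hN : φ.IsWeightedHomogeneous nwt N) (m : ℕ) :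
    (Einf^[m] φ).IsWeightedHomogeneous wt (a + m) ∧
      (Einf^[m] φ).IsWeightedHomogeneous nwt N := by
  induction m with
  | zero => exact ⟨ha, hN⟩
  | succ m ih =>
    rw [Function.iterate_succ_apply', ← add_assoc]
    refine ⟨ih.1.derivation Einf isWeightedHomogeneous_Einf_X_wt, ?_⟩
    simpa using ih.2.derivation Einf (c := 0) (by simpa using isWeightedHomogeneous_Einf_X_nwt)

lemma eq_zero_of_Dinf_eq_zero {g : Rinf} {a N : ℕ} (ha : g.IsWeightedHomogeneous wt a)
    (hN : g.IsWeightedHomogeneous nwt N) (hNa : N < 2 * a) (hD : Dinf g = 0) : g = 0 := by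
  have hE := isWeightedHomogeneous_iterate_Einf ha hN
  refine eq_zero_of_lowering_eq_zero_of_cartan_pos (E := Einf.toLinearMap)
    (D := Dinf.toLinearMap) (H := Hinf.toLinearMap) (c := 2 * (a : ℚ) - N) (M := N + 1)
    (fun x => by rw [← commutator_Einf_Dinf]; exact (Derivation.commutator_apply ..).symm)
    (by rw [sub_pos]; exact_mod_cast hNa) (fun m => ?_) hD
    (eq_zero_of_isWeightedHomogeneous_of_lt (hE (N + 1)).1 (hE (N + 1)).2 (by omega))
  have h := mkDerivation_smul_X_of_isWeightedHomogeneous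
    (isWeightedHomogeneous_cartanWt (hE m).1 (hE m).2)
  push_cast at h
  rw [show (2 * (a : ℚ) - N + 2 * m) = 2 * (a + m) - N by ring]
  exact h

/-- For `d ≥ 3`, if `f ∈ R_∞^{(d)}` is such that every monomial occurring in `f` has degree
at most `d − 2`, and `D_∞(f) = 0`, then `f = 0`. -/
theorem statement11 (d : ℕ) (hd : 3 ≤ d) (f : Rinf) (hf : f ∈ W d)
    (hdeg : ∀ m ∈ f.support, (m.sum fun s e => e * degv s) ≤ d - 2)
    (hker : Dinf f = 0) : f = 0 := by
  have hnwt : ∀ v ∈ f.support, Finsupp.weight nwt v < 2 * d := fun v hv => by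
    have := weight_nwt_le_degree_add_weight_wt v
    have := hf (mem_support_iff.mp hv)
    have := hdeg v hv
    omega
  rw [← sum_weightedHomogeneousComponent nwt f]
  refine (finsum_congr fun N => ?_).trans finsum_zero
  by_cases hN : N < 2 * d
  · refine eq_zero_of_Dinf_eq_zero (IsWeightedHomogeneous.weightedHomogeneousComponent hf nwt N)
      (weightedHomogeneousComponent_isWeightedHomogeneous N f) hN ?_
    rw [← weightedHomogeneousComponent_derivation Dinf isWeightedHomogeneous_Dinf_X_nwt, hker,
      map_zero]
  · exact weightedHomogeneousComponent_eq_zero' N f fun v hv => by have := hnwt v hv; omega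

end
end
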